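/- For the explicit q-Euler polynomial E_{k,q}(t) = (1+q)(1-q)^{-k} ∑_{l=0}^{k} (-1)^l C(k,l) q^{tl}/(1+q^l), the measure-consistency identity holds: for any rational t and odd prime p, E_{k,q}(t) = ([2]_q/[2]_{q^p}) [p]_q^k ∑_{i=0}^{p-1} (-1)^i E_{k,q^p}((t+i)/p). -/

import Mathlib

/-- The q-Euler polynomial `E_{k,q}(t)` expressed through the element `qt = q^t`. -/
noncomputable def qEulerPolyAt {K : Type*} [Field K] (q qt : K) (k : ℕ) : K :=
  (1 + q) * ((1 - q)⁻¹) ^ k *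
    ∑ l ∈ Finset.range (k + 1), (-1 : K) ^ l * (k.choose l : K) * qt ^ l / (1 + q ^ l)

/-- Measure-consistency identity: for any rational `t` (represented by the
element `T = q^t`, so that `(q^p)^{(t+i)/p} = T * q^i`) and odd prime `p`,
`E_{k,q}(t) = ([2]_q/[2]_{q^p}) [p]_q^k ∑_{i=0}^{p-1} (-1)^i E_{k,q^p}((t+i)/p)`. -/
theorem qEulerPoly_measure_consistency {K : Type*} [Field K] [CharZero K]
    (q T : K) (p : ℕ) (hp : Nat.Prime p) (hpo : Odd p)
    (hq : q ≠ 1) (hqp : q ^ p ≠ 1) (h : ∀ l : ℕ, 1 + q ^ l ≠ 0) (k : ℕ) :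
    qEulerPolyAt q T k =
      ((1 + q) / (1 + q ^ p)) * ((1 - q ^ p) / (1 - q)) ^ k *
        ∑ i ∈ Finset.range p, (-1 : K) ^ i * qEulerPolyAt (q ^ p) (T * q ^ i) k := by
  have hq1 : (1 : K) - q ≠ 0 := sub_ne_zero.mpr fun hh => hq hh.symm
  have hqp1 : (1 : K) - q ^ p ≠ 0 := sub_ne_zero.mpr fun hh => hqp hh.symm
  have hpl : ∀ l : ℕ, (1 : K) + (q ^ p) ^ l ≠ 0 := by
    intro l; rw [← pow_mul]; exact h (p * l)
  have key : ∀ l : ℕ,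
      (∑ i ∈ Finset.range p, (-(q ^ l)) ^ i) * (1 + q ^ l) = 1 + (q ^ p) ^ l := by
    intro l
    have h1 := geom_sum_mul (-(q ^ l)) p
    rw [hpo.neg_pow, ← pow_mul, Nat.mul_comm, pow_mul] at h1
    linear_combination -h1
  have step1 : ∀ l : ℕ,
      ∑ i ∈ Finset.range p,
        (-1 : K) ^ i * ((-1 : K) ^ l * (k.choose l : K) * (T * q ^ i) ^ l / (1 + (q ^ p) ^ l)) =
      (-1 : K) ^ l * (k.choose l : K) * T ^ l / (1 + q ^ l) := by
    intro l
    have hterm : ∀ i ∈ Finset.range p,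
        (-1 : K) ^ i * ((-1 : K) ^ l * (k.choose l : K) * (T * q ^ i) ^ l / (1 + (q ^ p) ^ l)) =
        ((-1 : K) ^ l * (k.choose l : K) * T ^ l / (1 + (q ^ p) ^ l)) * (-(q ^ l)) ^ i := by
      intro i _
      rw [div_mul_eq_mul_div]
      congr 1
      ring
    rw [Finset.sum_congr rfl hterm, ← Finset.mul_sum,
      div_mul_eq_mul_div, div_eq_div_iff (hpl l) (h l)]
    linear_combination ((-1 : K) ^ l * (k.choose l : K) * T ^ l) * key l
  simp only [qEulerPolyAt]
  have step2 : ∀ i ∈ Finset.range p,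
      (-1 : K) ^ i * ((1 + q ^ p) * ((1 - q ^ p)⁻¹) ^ k *
        ∑ l ∈ Finset.range (k + 1),
          (-1 : K) ^ l * (k.choose l : K) * (T * q ^ i) ^ l / (1 + (q ^ p) ^ l)) =
      (1 + q ^ p) * ((1 - q ^ p)⁻¹) ^ k *
        ∑ l ∈ Finset.range (k + 1),
          (-1 : K) ^ i * ((-1 : K) ^ l * (k.choose l : K) * (T * q ^ i) ^ l / (1 + (q ^ p) ^ l)) := by
    intro i _
    rw [← Finset.mul_sum]
    ring
  rw [Finset.sum_congr rfl step2, ← Finset.mul_sum, Finset.sum_comm,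
    Finset.sum_congr rfl (fun l _ => step1 l)]
  field_simp
  rw [eq_div_iff (h p)]
  generalize (∑ x ∈ Finset.range (k + 1), (-1 : K) ^ x * (k.choose x : K) * T ^ x / (1 + q ^ x)) = S
  rw [div_pow (1 - q ^ p)]
  linear_combination (-((1 + q) * ((1 - q) ^ k)⁻¹ * S * (1 + q ^ p))) * mul_inv_cancel₀ (pow_ne_zero k hqp1)
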